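/- Let σ > 0, 0 < ρ < 1, m > 0, K > 0, and γ ≥ 0. Then the family of terms (k,i,n,j) ↦ α(k,i,n)·G(j,n,i−n,γ), indexed over quadruples of naturals with 0 ≤ n ≤ i ≤ k and j ∈ ℕ, is absolutely summable; i.e., ∑_{k=0}^∞ ∑_{i=0}^{k} ∑_{n=0}^{i} ∑_{j=0}^∞ |α(k,i,n) G(j,n,i−n,γ)| < ∞, so the quadruple-series expression for the marginal CDF F_{R₁}(γ) is well defined. -/

import Mathlib

open MeasureTheory

/-- Pochhammer symbol (ascending factorial) `(m)_k = m (m+1) ⋯ (m+k-1)`. -/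
noncomputable def poch (m : ℝ) (k : ℕ) : ℝ := ∏ j ∈ Finset.range k, (m + j)

/-- Modified Bessel function of the first kind of order zero,
`I₀(y) = ∑ (y/2)^{2n} / (n!)²`. -/
noncomputable def I0 (y : ℝ) : ℝ := ∑' n : ℕ, (y / 2) ^ (2 * n) / (Nat.factorial n : ℝ) ^ 2

/-- Confluent hypergeometric function `₁F₁(m, 1; z) = ∑ (m)_n zⁿ / (n!)²`. -/
noncomputable def F11 (m z : ℝ) : ℝ := ∑' n : ℕ, poch m n * z ^ n / (Nat.factorial n : ℝ) ^ 2

/-- Series coefficient `α(k,i,n)` of the bivariate Rician shadowed joint PDF. -/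
noncomputable def alpha (σ ρ m K : ℝ) (k i n : ℕ) : ℝ :=
  (8 * Real.rpow (m * ρ / (m * ρ + K)) m / (σ ^ 6 * ρ * (1 - ρ) ^ 2)) *
  (poch m (k - i) * (K / (σ ^ 2 * ρ * (ρ * m + K))) ^ (k - i) /
    (Nat.factorial (k - i) : ℝ) ^ 2) *
  (1 / ((Nat.factorial n : ℝ) ^ 2 * (Nat.factorial (i - n) : ℝ) ^ 2 *
    (σ ^ 2 * (1 - ρ)) ^ (2 * i))) *
  ((Nat.factorial k : ℝ) / (2 * ((1 + ρ) / (σ ^ 2 * ρ * (1 - ρ))) ^ (k + 1)))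

/-- Closed-form power series of the bivariate Rician shadowed joint PDF. -/
noncomputable def fpdf (σ ρ m K r₁ r₂ : ℝ) : ℝ :=
  ∑' k : ℕ, ∑ i ∈ Finset.range (k + 1), ∑ n ∈ Finset.range (i + 1),
    alpha σ ρ m K k i n * r₁ ^ (2 * n + 1) * r₂ ^ (2 * (i - n) + 1) *
      Real.exp (-(r₁ ^ 2 + r₂ ^ 2) / (σ ^ 2 * (1 - ρ)))

/-- `G(j,l,q,γ) = (−1)^j γ^{2(l+j+1)} q! (σ²(1−ρ))^{q+1−j} / (j!·4(l+j+1))`. -/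
noncomputable def Gfun (σ ρ : ℝ) (j l q : ℕ) (γ : ℝ) : ℝ :=
  (-1 : ℝ) ^ j * γ ^ (2 * (l + j + 1)) * (Nat.factorial q : ℝ) *
    (σ ^ 2 * (1 - ρ)) ^ ((q : ℤ) + 1 - (j : ℤ)) /
    ((Nat.factorial j : ℝ) * (4 * (l + j + 1)))

/-- `Ḡ(λ,k)`, the `(2(k+1))`-th moment of the BPP distance distribution. -/
noncomputable def Gbar (Dalt ra lam : ℝ) (k : ℕ) : ℝ :=
  ((Dalt ^ 2 + lam ^ 2 + ra ^ 2) ^ (k + 2) - (Dalt ^ 2 + lam ^ 2) ^ (k + 2)) /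
    (ra ^ 2 * (k + 2))

/-! Write `k = n + q + d` and `i = n + q`. The term is at most a constant times
`(n+q+d)!/(n! q! d!) · Pⁿ/n! · Q^q · (m)_d R^d/d! · T^j/j!` with `Q = ρ/(1+ρ)` and
`R = K(1-ρ)/((ρm+K)(1+ρ))`, and `Q + R < 1`. Choosing weights `a + b + c = 1` with `Q < b` and
`R < c`, the trinomial coefficient is at most `(aⁿ b^q c^d)⁻¹`, so the family is dominated by a
product of two exponential series, a geometric series and the binomial series
`∑ (m)_d z^d / d! = (1 - z)^(-m)`, `z < 1`. -/

open Nat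

lemma poch_pos {m : ℝ} (hm : 0 < m) (d : ℕ) : 0 < poch m d :=
  Finset.prod_pos fun _ _ => by positivity

lemma summable_poch_mul_pow_div_factorial {m w : ℝ} (hm : 0 < m) (hw0 : 0 < w) (hw1 : w < 1) :
    Summable fun d : ℕ => poch m d * w ^ d / d ! := by
  refine summable_of_ratio_test_tendsto_lt_one hw1
    (.of_forall fun d => (div_pos (mul_pos (poch_pos hm d) (pow_pos hw0 d)) (by positivity)).ne') ?_
  have hratio (d : ℕ) : ‖poch m (d + 1) * w ^ (d + 1) / ((d + 1)! : ℝ)‖ /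
      ‖poch m d * w ^ d / (d ! : ℝ)‖ = (m * w + w * d) / (1 + 1 * d) := by
    have := poch_pos hm d
    have := poch_pos hm (d + 1)
    rw [Real.norm_of_nonneg (by positivity), Real.norm_of_nonneg (by positivity), poch,
      Finset.prod_range_succ, ← poch, factorial_succ]
    push_cast
    field_simp
    ring
  simpa only [hratio, div_one] using tendsto_add_mul_div_add_mul_atTop_nhds (m * w) 1 w one_ne_zero

lemma factorial_add_mul_pow_mul_pow_le {x y : ℝ} (hx : 0 ≤ x) (hy : 0 ≤ y) (i j : ℕ) :
    ((i + j)! : ℝ) * (x ^ i * y ^ j) ≤ i ! * j ! * (x + y) ^ (i + j) := by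
  have hterm : x ^ i * y ^ (i + j - i) * ((i + j).choose i : ℝ) ≤ (x + y) ^ (i + j) := by
    rw [add_pow]
    exact Finset.single_le_sum (f := fun k => x ^ k * y ^ (i + j - k) * ((i + j).choose k : ℝ))
      (fun k _ => by positivity) (Finset.mem_range.mpr (by omega))
  have hchoose : ((i + j).choose i * j ! * i ! : ℝ) = (i + j)! := by
    exact_mod_cast add_comm i j ▸ add_choose_mul_factorial_mul_factorial j i
  rw [Nat.add_sub_cancel_left] at hterm
  calc ((i + j)! : ℝ) * (x ^ i * y ^ j)
      = i ! * j ! * (x ^ i * y ^ j * ((i + j).choose i : ℝ)) := by rw [← hchoose]; ring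
    _ ≤ i ! * j ! * (x + y) ^ (i + j) := by gcongr

lemma factorial_add_add_mul_pow_le {a b c : ℝ} (ha : 0 ≤ a) (hb : 0 ≤ b) (hc : 0 ≤ c)
    (n q d : ℕ) :
    ((n + q + d)! : ℝ) * (a ^ n * b ^ q * c ^ d) ≤
      n ! * q ! * d ! * (a + b + c) ^ (n + q + d) := by
  refine le_of_mul_le_mul_right ?_ (by positivity : (0 : ℝ) < (n + q)!)
  calc ((n + q + d)! : ℝ) * (a ^ n * b ^ q * c ^ d) * (n + q)!
      = (n + q + d)! * c ^ d * ((n + q)! * (a ^ n * b ^ q)) := by ring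
    _ ≤ (n + q + d)! * c ^ d * (n ! * q ! * (a + b) ^ (n + q)) :=
        mul_le_mul_of_nonneg_left (factorial_add_mul_pow_mul_pow_le ha hb n q) (by positivity)
    _ = n ! * q ! * ((n + q + d)! * ((a + b) ^ (n + q) * c ^ d)) := by ring
    _ ≤ n ! * q ! * ((n + q)! * d ! * (a + b + c) ^ (n + q + d)) :=
        mul_le_mul_of_nonneg_left (factorial_add_mul_pow_mul_pow_le (add_nonneg ha hb) hc _ _)
          (by positivity)
    _ = n ! * q ! * d ! * (a + b + c) ^ (n + q + d) * (n + q)! := by ring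

lemma abs_Gfun_le {σ ρ : ℝ} (hσ : σ ≠ 0) (hρ1 : ρ < 1) (γ : ℝ) (j l q : ℕ) :
    |Gfun σ ρ j l q γ| ≤ γ ^ (2 * (l + j + 1)) * q ! * (σ ^ 2 * (1 - ρ)) ^ (q + 1) /
      ((σ ^ 2 * (1 - ρ)) ^ j * j ! * 4) := by
  set s := σ ^ 2 * (1 - ρ)
  have hs : 0 < s := by have := sub_pos.2 hρ1; positivity
  have hγ : 0 ≤ γ ^ (2 * (l + j + 1)) := (even_two_mul _).pow_nonneg γ
  have hL : (1 : ℝ) ≤ l + j + 1 := by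
    linarith [l.cast_nonneg (α := ℝ), j.cast_nonneg (α := ℝ)]
  have habs : |Gfun σ ρ j l q γ| =
      γ ^ (2 * (l + j + 1)) * q ! * s ^ (q + 1) / ((s ^ j * j ! * 4) * (l + j + 1)) := by
    rw [Gfun, abs_div, abs_mul, abs_mul, abs_mul, abs_pow, abs_neg, abs_one, one_pow, one_mul,
      abs_of_nonneg hγ, abs_of_nonneg (zpow_nonneg hs.le _), Nat.abs_cast,
      abs_of_pos (by positivity), zpow_sub₀ hs.ne', zpow_add_one₀ hs.ne', zpow_natCast,
      zpow_natCast]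
    field_simp
    ring
  rw [habs]
  exact div_le_div_of_nonneg_left (by positivity) (by positivity)
    (le_mul_of_one_le_right (by positivity) hL)

lemma exists_abs_alpha_mul_Gfun_le {σ ρ m K : ℝ} (hσ : 0 < σ) (hρ0 : 0 < ρ) (hρ1 : ρ < 1)
    (hm : 0 < m) (hK : 0 < K) (γ : ℝ) {a b c : ℝ} (ha : 0 < a) (hb : 0 < b) (hc : 0 < c)
    (habc : a + b + c = 1) :
    ∃ C, ∀ n q d j : ℕ, |alpha σ ρ m K (n + q + d) (n + q) n * Gfun σ ρ j n q γ| ≤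
      C * ((γ ^ 2 * ρ / (σ ^ 2 * (1 - ρ) * (1 + ρ) * a)) ^ n / n ! *
        ((ρ / (1 + ρ) / b) ^ q *
          (poch m d * (K * (1 - ρ) / ((ρ * m + K) * (1 + ρ)) / c) ^ d / d !)) *
        ((γ ^ 2 / (σ ^ 2 * (1 - ρ))) ^ j / j !)) := by
  have h1m : 0 < 1 - ρ := sub_pos.2 hρ1
  have hrpow : 0 < (m * ρ / (m * ρ + K)) ^ m := Real.rpow_pos_of_pos (by positivity) m
  refine ⟨8 * (m * ρ / (m * ρ + K)) ^ m / (σ ^ 6 * ρ * (1 - ρ) ^ 2) * γ ^ 2 *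
    (σ ^ 2 * (1 - ρ)) / (8 * ((1 + ρ) / (σ ^ 2 * ρ * (1 - ρ)))), fun n q d j => ?_⟩
  have hα : 0 ≤ alpha σ ρ m K (n + q + d) (n + q) n := by
    have := poch_pos hm (n + q + d - (n + q))
    unfold alpha; positivity
  have hpoch := poch_pos hm d
  have htrinomial := factorial_add_add_mul_pow_le ha.le hb.le hc.le n q d
  rw [habc, one_pow, mul_one] at htrinomial
  refine le_trans ?_ (mul_le_of_le_one_right (by positivity)
    (div_le_one_of_le₀ htrinomial (by positivity)))
  calc |alpha σ ρ m K (n + q + d) (n + q) n * Gfun σ ρ j n q γ|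
      = alpha σ ρ m K (n + q + d) (n + q) n * |Gfun σ ρ j n q γ| := by
        rw [abs_mul, abs_of_nonneg hα]
    _ ≤ alpha σ ρ m K (n + q + d) (n + q) n * (γ ^ (2 * (n + j + 1)) * q ! *
          (σ ^ 2 * (1 - ρ)) ^ (q + 1) / ((σ ^ 2 * (1 - ρ)) ^ j * j ! * 4)) :=
        mul_le_mul_of_nonneg_left (abs_Gfun_le hσ.ne' hρ1 γ j n q) hα
    _ = _ := by
        rw [alpha, Nat.add_sub_cancel_left, Nat.add_sub_cancel_left, Real.rpow_eq_pow]
        simp only [mul_pow, div_pow, pow_add, ← pow_mul]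
        field_simp
        ring

lemma summable_exp_mul_geometric_mul_binomial_mul_exp {m x y z t : ℝ} (hm : 0 < m)
    (hx : 0 ≤ x) (hy0 : 0 ≤ y) (hy1 : y < 1) (hz0 : 0 < z) (hz1 : z < 1) (ht : 0 ≤ t) :
    Summable fun p : (ℕ × ℕ × ℕ) × ℕ => x ^ p.1.1 / p.1.1 ! *
      (y ^ p.1.2.1 * (poch m p.1.2.2 * z ^ p.1.2.2 / p.1.2.2 !)) * (t ^ p.2 / p.2 !) := by
  have hbinom (d : ℕ) : 0 ≤ poch m d * z ^ d / d ! := by have := poch_pos hm d; positivity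
  have hgb : Summable fun p : ℕ × ℕ => y ^ p.1 * (poch m p.2 * z ^ p.2 / p.2 !) :=
    Summable.mul_of_nonneg (f := fun q => y ^ q) (g := fun d => poch m d * z ^ d / d !)
      (summable_geometric_of_lt_one hy0 hy1) (summable_poch_mul_pow_div_factorial hm hz0 hz1)
      (fun q => pow_nonneg hy0 q) hbinom
  have hegb : Summable fun p : ℕ × ℕ × ℕ =>
      x ^ p.1 / p.1 ! * (y ^ p.2.1 * (poch m p.2.2 * z ^ p.2.2 / p.2.2 !)) :=
    Summable.mul_of_nonneg (f := fun n => x ^ n / n !)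
      (g := fun p : ℕ × ℕ => y ^ p.1 * (poch m p.2 * z ^ p.2 / p.2 !))
      (Real.summable_pow_div_factorial x) hgb (fun n => by positivity)
      (fun p => mul_nonneg (pow_nonneg hy0 _) (hbinom _))
  exact Summable.mul_of_nonneg
    (f := fun p : ℕ × ℕ × ℕ =>
      x ^ p.1 / p.1 ! * (y ^ p.2.1 * (poch m p.2.2 * z ^ p.2.2 / p.2.2 !)))
    (g := fun j => t ^ j / j !) hegb (Real.summable_pow_div_factorial t)
    (fun p => mul_nonneg (by positivity) (mul_nonneg (pow_nonneg hy0 _) (hbinom _)))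
    (fun j => by positivity)

lemma exists_weights_of_add_lt_one {Q R : ℝ} (hQ : 0 ≤ Q) (hR : 0 ≤ R) (h : Q + R < 1) :
    ∃ a b c : ℝ, 0 < a ∧ 0 < b ∧ 0 < c ∧ a + b + c = 1 ∧ Q / b < 1 ∧ R / c < 1 :=
  ⟨(1 - Q - R) / 3, Q + (1 - Q - R) / 3, R + (1 - Q - R) / 3, by linarith, by linarith,
    by linarith, by ring, (div_lt_one (by linarith)).2 (by linarith),
    (div_lt_one (by linarith)).2 (by linarith)⟩

def triangleToGaps (p : {p : (ℕ × ℕ × ℕ) × ℕ // p.1.2.2 ≤ p.1.2.1 ∧ p.1.2.1 ≤ p.1.1}) :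
    (ℕ × ℕ × ℕ) × ℕ :=
  ((p.val.1.2.2, p.val.1.2.1 - p.val.1.2.2, p.val.1.1 - p.val.1.2.1), p.val.2)

lemma triangleToGaps_injective : Function.Injective triangleToGaps := by
  rintro ⟨⟨⟨k, i, n⟩, j⟩, hni, hik⟩ ⟨⟨⟨k', i', n'⟩, j'⟩, hni', hik'⟩ h
  simp only [triangleToGaps, Prod.mk.injEq] at h hni hik hni' hik'
  ext <;> simp only <;> omega

theorem cdf_series_abs_summable_general (σ ρ m K γ : ℝ)
    (hσ : 0 < σ) (hρ0 : 0 < ρ) (hρ1 : ρ < 1) (hm : 0 < m) (hK : 0 < K) :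
    Summable (fun p : {p : (ℕ × ℕ × ℕ) × ℕ // p.1.2.2 ≤ p.1.2.1 ∧ p.1.2.1 ≤ p.1.1} =>
      |alpha σ ρ m K p.val.1.1 p.val.1.2.1 p.val.1.2.2 *
        Gfun σ ρ p.val.2 p.val.1.2.2 (p.val.1.2.1 - p.val.1.2.2) γ|) := by
  have h1m : 0 < 1 - ρ := sub_pos.2 hρ1
  have hQR : ρ / (1 + ρ) + K * (1 - ρ) / ((ρ * m + K) * (1 + ρ)) < 1 := by
    rw [div_add_div _ _ (by positivity) (by positivity), div_lt_one (by positivity)]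
    nlinarith [mul_pos hρ0 hm, mul_pos hρ0 hK, mul_pos (mul_pos hρ0 hρ0) hm]
  obtain ⟨a, b, c, ha, hb, hc, habc, hb1, hc1⟩ :=
    exists_weights_of_add_lt_one (by positivity) (by positivity) hQR
  obtain ⟨C, hC⟩ := exists_abs_alpha_mul_Gfun_le hσ hρ0 hρ1 hm hK γ ha hb hc habc
  have hmajorant := summable_exp_mul_geometric_mul_binomial_mul_exp
    (x := γ ^ 2 * ρ / (σ ^ 2 * (1 - ρ) * (1 + ρ) * a)) (t := γ ^ 2 / (σ ^ 2 * (1 - ρ)))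
    hm (by positivity) (by positivity) hb1 (by positivity) hc1 (by positivity)
  refine .of_nonneg_of_le (fun _ => abs_nonneg _) (fun p => ?_)
    ((hmajorant.mul_left C).comp_injective triangleToGaps_injective)
  obtain ⟨⟨⟨k, i, n⟩, j⟩, hni, hik⟩ := p
  obtain ⟨q, rfl⟩ : ∃ q, i = n + q := Nat.exists_eq_add_of_le hni
  obtain ⟨d, rfl⟩ : ∃ d, k = n + q + d := Nat.exists_eq_add_of_le hik
  simpa only [Function.comp_apply, triangleToGaps, Nat.add_sub_cancel_left] using hC n q d j

theorem cdf_series_abs_summable (σ ρ m K γ : ℝ)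
    (hσ : 0 < σ) (hρ0 : 0 < ρ) (hρ1 : ρ < 1) (hm : 0 < m) (hK : 0 < K) (hγ : 0 ≤ γ) :
    Summable (fun p : {p : (ℕ × ℕ × ℕ) × ℕ // p.1.2.2 ≤ p.1.2.1 ∧ p.1.2.1 ≤ p.1.1} =>
      |alpha σ ρ m K p.val.1.1 p.val.1.2.1 p.val.1.2.2 *
        Gfun σ ρ p.val.2 p.val.1.2.2 (p.val.1.2.1 - p.val.1.2.2) γ|) :=
  cdf_series_abs_summable_general σ ρ m K γ hσ hρ0 hρ1 hm hK
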